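/- Portfolio-wealth ratio bound in the peak region: for all h₁ ≥ h₂ > 0 and every y with z_α h₁^{−γ} ≤ y ≤ h₁^{−γ}, one has m₁(m₁−γ*)·C₁(h₁,h₂)·y^{m₁−1} + m₂(m₂−γ*)·C₂(h₁)·y^{m₂−1} − h₁/(rγ) ≤ 0. -/

import Mathlib

/-- Coefficient `C₂(h)`. -/
noncomputable def C2 (r δ κ γ m₁ m₂ α zα : ℝ) (h : ℝ) : ℝ :=
  (1 - (γ - 1) / γ) / ((m₁ - m₂) * (m₂ - (γ - 1) / γ)) *
    (m₁ * (α * δ - 1) / δ * zα ^ (-m₂) + (m₁ - 1) / r * zα ^ (1 - m₂)) *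
    h ^ (1 + γ * (m₂ - 1))

/-- Coefficient `C₅(h)`. -/
noncomputable def C5 (r δ κ γ m₁ m₂ β zβ : ℝ) (h : ℝ) : ℝ :=
  (1 - (γ - 1) / γ) / ((m₁ - m₂) * (m₁ - (γ - 1) / γ)) *
    (m₂ * (β * δ + 1) / δ * zβ ^ (-m₁) + (1 - m₂) / r * zβ ^ (1 - m₁)) *
    h ^ (1 + γ * (m₁ - 1))

/-- Coefficient `C₃(h)`. -/
noncomputable def C3 (r δ κ γ m₁ m₂ β zβ : ℝ) (h : ℝ) : ℝ :=
  C5 r δ κ γ m₁ m₂ β zβ h +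
    2 * ((γ - 1) / γ - 1) / (κ ^ 2 * (m₁ - m₂) * m₁ * (m₁ - 1) * (m₁ - (γ - 1) / γ)) *
      h ^ (1 + γ * (m₁ - 1))

/-- Coefficient `C₄(h)`. -/
noncomputable def C4 (r δ κ γ m₁ m₂ α zα : ℝ) (h : ℝ) : ℝ :=
  C2 r δ κ γ m₁ m₂ α zα h -
    2 * ((γ - 1) / γ - 1) / (κ ^ 2 * (m₁ - m₂) * m₂ * (m₂ - 1) * (m₂ - (γ - 1) / γ)) *
      h ^ (1 + γ * (m₂ - 1))

/-- Coefficient `C₁(h₁,h₂)`. -/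
noncomputable def C1 (r δ κ γ m₁ m₂ β zβ : ℝ) (h₁ h₂ : ℝ) : ℝ :=
  C3 r δ κ γ m₁ m₂ β zβ h₂ +
    2 * (1 - (γ - 1) / γ) / (κ ^ 2 * (m₁ - m₂) * m₁ * (m₁ - 1) * (m₁ - (γ - 1) / γ)) *
      h₁ ^ (1 + γ * (m₁ - 1))

/-- Coefficient `C₆(h₁,h₂)`. -/
noncomputable def C6 (r δ κ γ m₁ m₂ α zα : ℝ) (h₁ h₂ : ℝ) : ℝ :=
  C4 r δ κ γ m₁ m₂ α zα h₁ -
    2 * (1 - (γ - 1) / γ) / (κ ^ 2 * (m₁ - m₂) * m₂ * (m₂ - 1) * (m₂ - (γ - 1) / γ)) *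
      h₂ ^ (1 + γ * (m₂ - 1))

/-- Weighted AM-GM specialization. -/
lemma amgm2 (x p q : ℝ) (hx : 0 < x) (hp : 0 < p) (hq : 0 < q) :
    p + q ≤ q * x ^ p + p * x ^ (-q) := by
  have hpq : 0 < p + q := by linarith
  have h := Real.geom_mean_le_arith_mean2_weighted
    (div_nonneg hq.le hpq.le) (div_nonneg hp.le hpq.le)
    (Real.rpow_pos_of_pos hx p).le (Real.rpow_pos_of_pos hx (-q)).le
    (by field_simp; try ring)
  have hgm : (x ^ p) ^ (q / (p + q)) * (x ^ (-q)) ^ (p / (p + q)) = 1 := by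
    rw [← Real.rpow_mul hx.le, ← Real.rpow_mul hx.le, ← Real.rpow_add hx]
    rw [show p * (q / (p+q)) + -q * (p / (p+q)) = 0 by field_simp; try ring, Real.rpow_zero]
  rw [hgm] at h
  have := mul_le_mul_of_nonneg_left h hpq.le
  calc p + q = (p + q) * 1 := by ring
    _ ≤ (p + q) * (q / (p + q) * x ^ p + p / (p + q) * x ^ (-q)) := this
    _ = q * x ^ p + p * x ^ (-q) := by field_simp; try ring

/-- Max-at-endpoints bound for `A x^p + B x^q` on `[a,b]`. -/
lemma interp_bound (A B a b x p q M : ℝ) (hA : 0 ≤ A) (hB : 0 ≤ B) (ha : 0 < a)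
    (hax : a ≤ x) (hxb : x ≤ b)
    (hMa : A * a ^ p + B * a ^ q ≤ M) (hMb : A * b ^ p + B * b ^ q ≤ M) :
    A * x ^ p + B * x ^ q ≤ M := by
  have hx0 : 0 < x := lt_of_lt_of_le ha hax
  have hb0 : 0 < b := lt_of_lt_of_le hx0 hxb
  rcases eq_or_lt_of_le (le_trans hax hxb) with hab | hab
  · have hxa : x = a := le_antisymm (hab ▸ hxb) hax
    rw [hxa]; exact hMa
  · set t := (Real.log x - Real.log a) / (Real.log b - Real.log a) with htdef
    have hlab : Real.log a < Real.log b := Real.log_lt_log ha hab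
    have hlax : Real.log a ≤ Real.log x := Real.log_le_log ha hax
    have hlxb : Real.log x ≤ Real.log b := Real.log_le_log hx0 hxb
    have ht0 : 0 ≤ t := div_nonneg (by linarith) (by linarith)
    have ht1 : t ≤ 1 := (div_le_one (by linarith)).mpr (by linarith)
    have hlx : Real.log x = (1 - t) * Real.log a + t * Real.log b := by
      have hne : Real.log b - Real.log a ≠ 0 := by linarith
      field_simp [htdef]
      have h2 : t * (Real.log b - Real.log a) = Real.log x - Real.log a := by
        rw [htdef]; exact div_mul_cancel₀ _ hne
      linear_combination -h2
    have key : ∀ e : ℝ, x ^ e ≤ (1 - t) * a ^ e + t * b ^ e := by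
      intro e
      have hxe : x ^ e = (a ^ e) ^ (1 - t) * (b ^ e) ^ t := by
        rw [← Real.rpow_mul ha.le, ← Real.rpow_mul hb0.le,
          Real.rpow_def_of_pos hx0, Real.rpow_def_of_pos ha, Real.rpow_def_of_pos hb0,
          ← Real.exp_add]
        congr 1
        linear_combination e * hlx
      rw [hxe]
      exact Real.geom_mean_le_arith_mean2_weighted (by linarith) ht0
        (Real.rpow_pos_of_pos ha e).le (Real.rpow_pos_of_pos hb0 e).le (by ring)
    calc A * x ^ p + B * x ^ q
        ≤ A * ((1-t) * a ^ p + t * b ^ p) + B * ((1-t) * a ^ q + t * b ^ q) := by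
          exact add_le_add (mul_le_mul_of_nonneg_left (key p) hA)
            (mul_le_mul_of_nonneg_left (key q) hB)
      _ = (1-t) * (A * a ^ p + B * a ^ q) + t * (A * b ^ p + B * b ^ q) := by ring
      _ ≤ (1-t) * M + t * M := add_le_add
          (mul_le_mul_of_nonneg_left hMa (by linarith)) (mul_le_mul_of_nonneg_left hMb ht0)
      _ = M := by ring

lemma le_zero_of_mul (X D N : ℝ) (hD : 0 < D) (hX : X * D = N) (hN : N ≤ 0) : X ≤ 0 := by
  by_contra hc
  push_neg at hc
  nlinarith

set_option maxHeartbeats 1000000 in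
/-- Portfolio-wealth ratio bound in the peak region: for all
`h₁ ≥ h₂ > 0` and every `y` with `z_α h₁^{−γ} ≤ y ≤ h₁^{−γ}`, one has
`m₁(m₁−γ*) C₁(h₁,h₂) y^{m₁−1} + m₂(m₂−γ*) C₂(h₁) y^{m₂−1} − h₁/(rγ) ≤ 0`. -/
theorem portfolio_ratio_bound_peak (r δ κ γ m₁ m₂ α β zα zβ : ℝ)
    (hr : 0 < r) (hδ : 0 < δ) (hκ : 0 < κ) (hγ : 0 < γ) (hγ1 : γ ≠ 1)
    (hK : 0 < r + (δ - r) / γ + ((γ - 1) / (2 * γ ^ 2)) * κ ^ 2)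
    (hQ1 : κ ^ 2 / 2 * m₁ ^ 2 + (δ - r - κ ^ 2 / 2) * m₁ - δ = 0)
    (hQ2 : κ ^ 2 / 2 * m₂ ^ 2 + (δ - r - κ ^ 2 / 2) * m₂ - δ = 0)
    (hm1 : 1 < m₁) (hm2 : m₂ < min ((γ - 1) / γ) 0)
    (hα : 0 ≤ α) (hα' : α < 1 / δ) (hβ : 0 ≤ β)
    (hzα : zα ∈ Set.Ioc 0 (1 - α * δ))
    (hzαeq : 2 / (κ ^ 2 * m₁ * (m₁ - 1)) * zα ^ m₁ + zα / r * (m₂ - 1) + m₂ * (α - 1 / δ) = 0)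
    (hzβ : zβ ∈ Set.Ici (1 + β * δ))
    (hzβeq : 2 / (κ ^ 2 * m₂ * (m₂ - 1)) * zβ ^ m₂ + zβ / r * (m₁ - 1) - m₁ * (β + 1 / δ) = 0)
    :
    ∀ h₁ h₂ : ℝ, 0 < h₂ → h₂ ≤ h₁ →
      ∀ y : ℝ, zα * h₁ ^ (-γ) ≤ y → y ≤ h₁ ^ (-γ) →
        m₁ * (m₁ - (γ - 1) / γ) * C1 r δ κ γ m₁ m₂ β zβ h₁ h₂ * y ^ (m₁ - 1) +
            m₂ * (m₂ - (γ - 1) / γ) * C2 r δ κ γ m₁ m₂ α zα h₁ * y ^ (m₂ - 1) -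
            h₁ / (r * γ) ≤ 0 := by
  intro h₁ h₂ hh2 hle y hy1 hy2
  obtain ⟨hza0, hza2⟩ := hzα
  set G := (γ - 1) / γ with hGdef
  have hzβ' : 1 + β * δ ≤ zβ := Set.mem_Ici.mp hzβ
  have hγne : γ ≠ 0 := ne_of_gt hγ
  have hg1 : G < 1 := by rw [hGdef, div_lt_one hγ]; linarith
  have hm2g : m₂ < G := lt_of_lt_of_le hm2 (min_le_left _ _)
  have hm20 : m₂ < 0 := lt_of_lt_of_le hm2 (min_le_right _ _)
  have hm1g : G < m₁ := lt_trans hg1 hm1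
  have hm12 : m₂ < m₁ := lt_trans hm2g hm1g
  have h1mg : 0 < 1 - G := by linarith
  have hκ2 : (0:ℝ) < κ ^ 2 := by positivity
  have hne1 : m₁ - G ≠ 0 := ne_of_gt (by linarith)
  have hne2 : m₂ - G ≠ 0 := ne_of_lt (by linarith)
  have hne3 : m₁ ≠ 0 := ne_of_gt (by linarith)
  have hne4 : m₁ - 1 ≠ 0 := ne_of_gt (by linarith)
  have hne5 : m₂ ≠ 0 := ne_of_lt (by linarith)
  have hne6 : m₂ - 1 ≠ 0 := ne_of_lt (by linarith)
  have hαδ : 0 ≤ α * δ := mul_nonneg hα hδ.le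
  have hza1 : zα ≤ 1 := le_trans hza2 (by linarith)
  have hzb1 : (1:ℝ) ≤ zβ := le_trans (by nlinarith) hzβ'
  have hzb0 : (0:ℝ) < zβ := by linarith
  have h10 : (0:ℝ) < h₁ := lt_of_lt_of_le hh2 hle
  -- quadratic identities
  have hdne : m₁ - m₂ ≠ 0 := ne_of_gt (by linarith)
  have hsum : κ ^ 2 / 2 * (m₁ + m₂) + (δ - r - κ ^ 2 / 2) = 0 := by
    have h0 : (m₁ - m₂) * (κ ^ 2 / 2 * (m₁ + m₂) + (δ - r - κ ^ 2 / 2)) = 0 := by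
      linear_combination hQ1 - hQ2
    rcases mul_eq_zero.mp h0 with h | h
    · exact absurd h hdne
    · exact h
  have hprod : κ ^ 2 / 2 * (m₁ * m₂) + δ = 0 := by linear_combination m₁ * hsum - hQ1
  have hrid : κ ^ 2 / 2 * (m₁ - 1) * (1 - m₂) = r := by linear_combination hsum - hprod
  -- rpow facts
  have hw0 : 0 < zα ^ (m₁ - 1) := Real.rpow_pos_of_pos hza0 _
  have hv0 : 0 < zα ^ (m₂ - 1) := Real.rpow_pos_of_pos hza0 _
  have hW0 : 0 < zβ ^ (m₁ - 1) := Real.rpow_pos_of_pos hzb0 _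
  have hU0 : 0 < zβ ^ (m₂ - 1) := Real.rpow_pos_of_pos hzb0 _
  have hw1 : zα ^ (m₁ - 1) ≤ 1 := Real.rpow_le_one hza0.le hza1 (by linarith)
  have hz1 : zα ^ (1 - m₂) = (zα ^ (m₂ - 1))⁻¹ := by
    rw [show (1 - m₂) = -(m₂ - 1) by ring, Real.rpow_neg hza0.le]
  have hz2 : zα ^ (-m₂) = (zα ^ (m₂ - 1))⁻¹ * zα⁻¹ := by
    rw [show -m₂ = -(m₂ - 1) + -1 by ring, Real.rpow_add hza0, Real.rpow_neg hza0.le,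
      Real.rpow_neg_one]
  have hz3 : zα ^ m₁ = zα ^ (m₁ - 1) * zα := by
    have h := Real.rpow_add hza0 (m₁ - 1) 1
    rw [Real.rpow_one] at h
    rw [show m₁ - 1 + 1 = m₁ from by ring] at h
    exact h
  have hb1 : zβ ^ (1 - m₁) = (zβ ^ (m₁ - 1))⁻¹ := by
    rw [show (1 - m₁) = -(m₁ - 1) by ring, Real.rpow_neg hzb0.le]
  have hb2 : zβ ^ (-m₁) = (zβ ^ (m₁ - 1))⁻¹ * zβ⁻¹ := by
    rw [show -m₁ = -(m₁ - 1) + -1 by ring, Real.rpow_add hzb0, Real.rpow_neg hzb0.le,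
      Real.rpow_neg_one]
  have hb3 : zβ ^ m₂ = zβ ^ (m₂ - 1) * zβ := by
    have h := Real.rpow_add hzb0 (m₂ - 1) 1
    rw [Real.rpow_one] at h
    rw [show m₂ - 1 + 1 = m₂ from by ring] at h
    exact h
  -- AM-GM facts
  have haz : m₁ - m₂ ≤ (1 - m₂) * zα ^ (m₁ - 1) + (m₁ - 1) * zα ^ (m₂ - 1) := by
    have h := amgm2 zα (m₁ - 1) (1 - m₂) hza0 (by linarith) (by linarith)
    rw [show -(1 - m₂) = m₂ - 1 from by ring] at h
    linarith
  have hbz : m₁ - m₂ ≤ (1 - m₂) * zβ ^ (m₁ - 1) + (m₁ - 1) * zβ ^ (m₂ - 1) := by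
    have h := amgm2 zβ (m₁ - 1) (1 - m₂) hzb0 (by linarith) (by linarith)
    rw [show -(1 - m₂) = m₂ - 1 from by ring] at h
    linarith
  -- cleared root equations
  have hzaP : 2 * (r * δ) * (zα ^ (m₁ - 1) * zα) + κ ^ 2 * m₁ * (m₁ - 1) * δ * (zα * (m₂ - 1))
      + κ ^ 2 * m₁ * (m₁ - 1) * (r * (m₂ * (α * δ - 1))) = 0 := by
    have h := hzαeq
    rw [hz3] at h
    field_simp [hκ.ne', hne3, hne4, hr.ne', hδ.ne'] at h
    linear_combination h
  have hzbP : 2 * (r * δ) * (zβ ^ (m₂ - 1) * zβ) + κ ^ 2 * m₂ * (m₂ - 1) * δ * (zβ * (m₁ - 1))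
      - κ ^ 2 * m₂ * (m₂ - 1) * (r * (m₁ * (β * δ + 1))) = 0 := by
    have h := hzβeq
    rw [hb3] at h
    field_simp [hκ.ne', hne5, hne6, hr.ne', hδ.ne'] at h
    linear_combination h
  -- exponent identities
  have hE1 : h₁ ^ (1 + γ * (m₁ - 1)) * (h₁ ^ (-γ)) ^ (m₁ - 1) = h₁ := by
    rw [← Real.rpow_mul h10.le, ← Real.rpow_add h10,
      show 1 + γ * (m₁ - 1) + -γ * (m₁ - 1) = 1 from by ring, Real.rpow_one]
  have hE2 : h₁ ^ (1 + γ * (m₂ - 1)) * (h₁ ^ (-γ)) ^ (m₂ - 1) = h₁ := by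
    rw [← Real.rpow_mul h10.le, ← Real.rpow_add h10,
      show 1 + γ * (m₂ - 1) + -γ * (m₂ - 1) = 1 from by ring, Real.rpow_one]
  have hy0 : 0 < y := lt_of_lt_of_le (by positivity) hy1
  ---- Step 1 : C3 h₂ ≤ 0
  have hC3 : C3 r δ κ γ m₁ m₂ β zβ h₂ ≤ 0 := by
    have hK0 : 0 < h₂ ^ (1 + γ * (m₁ - 1)) := Real.rpow_pos_of_pos hh2 _
    have hbr : (κ ^ 2 * m₁ * (m₁ - 1) * (m₂ * (β * δ + 1) * r + (1 - m₂) * δ * zβ)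
          - 2 * δ * r * zβ ^ (m₁ - 1) * zβ) * (m₂ - 1)
        = 2 * r * δ * zβ * ((1 - m₂) * zβ ^ (m₁ - 1) + (m₁ - 1) * zβ ^ (m₂ - 1) - (m₁ - m₂)) := by
      linear_combination (-(m₁ - 1)) * hzbP - 2 * (m₁ - m₂) * δ * zβ * hrid
    have hbrneg : κ ^ 2 * m₁ * (m₁ - 1) * (m₂ * (β * δ + 1) * r + (1 - m₂) * δ * zβ)
        - 2 * δ * r * zβ ^ (m₁ - 1) * zβ ≤ 0 := by
      nlinarith only [hbr, mul_nonneg (mul_nonneg (mul_nonneg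
        (by linarith only [hr] : (0:ℝ) ≤ 2 * r) hδ.le) hzb0.le) (by linarith only [hbz] :
          (0:ℝ) ≤ (1 - m₂) * zβ ^ (m₁ - 1) + (m₁ - 1) * zβ ^ (m₂ - 1) - (m₁ - m₂)),
        (by linarith only [hm20] : (0:ℝ) < 1 - m₂)]
    refine le_zero_of_mul _
      ((m₁ - m₂) * (m₁ - G) * δ * r * zβ ^ (m₁ - 1) * zβ * (κ ^ 2 * m₁ * (m₁ - 1)))
      ((1 - G) * ((κ ^ 2 * m₁ * (m₁ - 1) * (m₂ * (β * δ + 1) * r + (1 - m₂) * δ * zβ)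
        - 2 * δ * r * zβ ^ (m₁ - 1) * zβ) * h₂ ^ (1 + γ * (m₁ - 1)))) ?_ ?_ ?_
    · have h1 : 0 < m₁ - m₂ := by linarith
      have h2 : 0 < m₁ - G := by linarith
      have h3 : 0 < m₁ := by linarith
      have h4 : 0 < m₁ - 1 := by linarith
      positivity
    · unfold C3 C5
      rw [← hGdef, hb1, hb2]
      field_simp [hdne, hne1, hne3, hne4, hκ.ne', hr.ne', hδ.ne', hzb0.ne', hW0.ne']
      ring
    · exact mul_nonpos_of_nonneg_of_nonpos (by linarith)
        (mul_nonpos_of_nonpos_of_nonneg hbrneg hK0.le)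
  ---- Step 2 : B₂ ≤ 0
  have hB2 : m₁ * (α * δ - 1) / δ * zα ^ (-m₂) + (m₁ - 1) / r * zα ^ (1 - m₂) ≤ 0 := by
    have hNid : (m₁ * (α * δ - 1) * r + (m₁ - 1) * δ * zα) * (κ ^ 2 * m₁ * (m₁ - 1) * m₂)
        = m₁ * δ * zα * (κ ^ 2 * (m₁ - 1) * (m₁ - m₂) - 2 * r * zα ^ (m₁ - 1)) := by
      linear_combination m₁ * hzaP
    have h1 : 2 * r * zα ^ (m₁ - 1) ≤ κ ^ 2 * (m₁ - 1) * (1 - m₂) := by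
      nlinarith only [hw1, hrid, hr]
    have h2 : 0 < κ ^ 2 * (m₁ - 1) * (m₁ - m₂) - 2 * r * zα ^ (m₁ - 1) := by
      nlinarith only [h1, mul_pos (mul_pos hκ2 (by linarith only [hm1] : (0:ℝ) < m₁ - 1))
        (by linarith only [hm1] : (0:ℝ) < m₁ - 1)]
    have hN : m₁ * (α * δ - 1) * r + (m₁ - 1) * δ * zα ≤ 0 := by
      nlinarith only [hNid, mul_pos (mul_pos (mul_pos (by linarith : (0:ℝ) < m₁) hδ) hza0) h2,
        mul_pos (mul_pos (mul_pos hκ2 (by linarith : (0:ℝ) < m₁))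
          (by linarith : (0:ℝ) < m₁ - 1)) (by linarith : (0:ℝ) < -m₂)]
    rw [hz1, hz2]
    refine le_zero_of_mul _ (δ * r * zα ^ (m₂ - 1) * zα)
      (m₁ * (α * δ - 1) * r + (m₁ - 1) * δ * zα) ?_ ?_ hN
    · positivity
    · field_simp
  ---- B coefficient nonneg
  have hBfull : 0 ≤ m₂ * (m₂ - G) * C2 r δ κ γ m₁ m₂ α zα h₁ := by
    have hf : m₂ * (m₂ - G) *
        ((1 - G) / ((m₁ - m₂) * (m₂ - G)) * h₁ ^ (1 + γ * (m₂ - 1))) ≤ 0 := by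
      refine le_zero_of_mul _ (m₁ - m₂) (m₂ * ((1 - G) * h₁ ^ (1 + γ * (m₂ - 1)))) ?_ ?_ ?_
      · linarith
      · field_simp [hdne, hne2]
      · exact mul_nonpos_of_nonpos_of_nonneg hm20.le
          (mul_nonneg (by linarith) (Real.rpow_pos_of_pos h10 _).le)
    have hexp : m₂ * (m₂ - G) * C2 r δ κ γ m₁ m₂ α zα h₁
        = (m₂ * (m₂ - G) *
            ((1 - G) / ((m₁ - m₂) * (m₂ - G)) * h₁ ^ (1 + γ * (m₂ - 1)))) *
          (m₁ * (α * δ - 1) / δ * zα ^ (-m₂) + (m₁ - 1) / r * zα ^ (1 - m₂)) := by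
      unfold C2
      rw [← hGdef]
      ring
    rw [hexp]
    nlinarith only [hf, hB2]
  ---- coefficient inequalities at endpoints
  have hD0 : 0 < (m₁ - m₂) * m₁ * (m₁ - 1) * κ ^ 2 * δ * r * zα * zα ^ (m₂ - 1) := by
    have h1 : 0 < m₁ - m₂ := by linarith
    have h3 : 0 < m₁ := by linarith
    have h4 : 0 < m₁ - 1 := by linarith
    positivity
  have hcAid : ∀ u vv : ℝ,
      (m₁ * (m₁ - G) *
          (2 * (1 - G) / (κ ^ 2 * (m₁ - m₂) * m₁ * (m₁ - 1) * (m₁ - G))) * u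
        + m₂ * (m₂ - G) *
          ((1 - G) / ((m₁ - m₂) * (m₂ - G)) *
            (m₁ * (α * δ - 1) / δ * ((zα ^ (m₂ - 1))⁻¹ * zα⁻¹)
              + (m₁ - 1) / r * (zα ^ (m₂ - 1))⁻¹)) * vv) *
        ((m₁ - m₂) * m₁ * (m₁ - 1) * κ ^ 2 * δ * r * zα * zα ^ (m₂ - 1))
      = (1 - G) * (2 * m₁ * (δ * r * zα * zα ^ (m₂ - 1)) * u
        + m₁ * (m₁ - 1) * κ ^ 2 * m₂ * (m₁ * (α * δ - 1) * r + (m₁ - 1) * δ * zα) * vv) := by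
    intro u vv
    field_simp [hdne, hne1, hne2, hne3, hne4, hκ.ne', hr.ne', hδ.ne', hza0.ne', hv0.ne']
  have h3rg : 1 / (r * γ) * ((m₁ - m₂) * m₁ * (m₁ - 1) * κ ^ 2 * δ * r * zα * zα ^ (m₂ - 1))
      = (1 - G) * ((m₁ - m₂) * m₁ * (m₁ - 1) * κ ^ 2 * δ * zα * zα ^ (m₂ - 1)) := by
    rw [hGdef]
    field_simp
    ring
  have hIVcoef : m₁ * (m₁ - G) *
        (2 * (1 - G) / (κ ^ 2 * (m₁ - m₂) * m₁ * (m₁ - 1) * (m₁ - G))) * zα ^ (m₁ - 1)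
      + m₂ * (m₂ - G) *
        ((1 - G) / ((m₁ - m₂) * (m₂ - G)) *
          (m₁ * (α * δ - 1) / δ * ((zα ^ (m₂ - 1))⁻¹ * zα⁻¹)
            + (m₁ - 1) / r * (zα ^ (m₂ - 1))⁻¹)) * zα ^ (m₂ - 1)
      ≤ 1 / (r * γ) := by
    refine le_of_mul_le_mul_right ?_ hD0
    rw [hcAid (zα ^ (m₁ - 1)) (zα ^ (m₂ - 1)), h3rg]
    have hkey : (1 - G) * (2 * m₁ * (δ * r * zα * zα ^ (m₂ - 1)) * zα ^ (m₁ - 1)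
        + m₁ * (m₁ - 1) * κ ^ 2 * m₂ * (m₁ * (α * δ - 1) * r + (m₁ - 1) * δ * zα) * zα ^ (m₂ - 1))
        = (1 - G) * ((m₁ - m₂) * m₁ * (m₁ - 1) * κ ^ 2 * δ * zα * zα ^ (m₂ - 1)) := by
      linear_combination ((1 - G) * m₁ * zα ^ (m₂ - 1)) * hzaP
    linarith only [hkey]
  have hVcoef : m₁ * (m₁ - G) *
        (2 * (1 - G) / (κ ^ 2 * (m₁ - m₂) * m₁ * (m₁ - 1) * (m₁ - G))) * 1
      + m₂ * (m₂ - G) *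
        ((1 - G) / ((m₁ - m₂) * (m₂ - G)) *
          (m₁ * (α * δ - 1) / δ * ((zα ^ (m₂ - 1))⁻¹ * zα⁻¹)
            + (m₁ - 1) / r * (zα ^ (m₂ - 1))⁻¹)) * 1
      ≤ 1 / (r * γ) := by
    refine le_of_mul_le_mul_right ?_ hD0
    rw [hcAid 1 1, h3rg]
    have hVid : (1 - G) * ((m₁ - m₂) * m₁ * (m₁ - 1) * κ ^ 2 * δ * zα * zα ^ (m₂ - 1))
        - (1 - G) * (2 * m₁ * (δ * r * zα * zα ^ (m₂ - 1)) * 1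
          + m₁ * (m₁ - 1) * κ ^ 2 * m₂ * (m₁ * (α * δ - 1) * r + (m₁ - 1) * δ * zα) * 1)
        = (1 - G) * m₁ * (κ ^ 2 * (m₁ - 1) * δ * zα *
            ((1 - m₂) * zα ^ (m₁ - 1) + (m₁ - 1) * zα ^ (m₂ - 1) - (m₁ - m₂))) := by
      linear_combination ((1 - G) * m₁ * (-1 : ℝ)) * hzaP
        + ((1 - G) * m₁ * 2 * (zα ^ (m₂ - 1) - zα ^ (m₁ - 1)) * δ * zα) * hrid
    have hSpos : 0 ≤ (1 - G) * m₁ * (κ ^ 2 * (m₁ - 1) * δ * zα *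
        ((1 - m₂) * zα ^ (m₁ - 1) + (m₁ - 1) * zα ^ (m₂ - 1) - (m₁ - m₂))) := by
      apply mul_nonneg (mul_nonneg (by linarith) (by linarith))
      apply mul_nonneg
      · have h4 : 0 < m₁ - 1 := by linarith
        positivity
      · linarith only [haz]
    linarith only [hVid, hSpos]
  -- endpoint bounds for interp_bound
  have hapos : 0 < zα * h₁ ^ (-γ) := by positivity
  have hMb : m₁ * (m₁ - G) *
        (2 * (1 - G) / (κ ^ 2 * (m₁ - m₂) * m₁ * (m₁ - 1) * (m₁ - G)) *
          h₁ ^ (1 + γ * (m₁ - 1))) * (h₁ ^ (-γ)) ^ (m₁ - 1)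
      + m₂ * (m₂ - G) * C2 r δ κ γ m₁ m₂ α zα h₁ * (h₁ ^ (-γ)) ^ (m₂ - 1)
      ≤ h₁ / (r * γ) := by
    have hval : m₁ * (m₁ - G) *
          (2 * (1 - G) / (κ ^ 2 * (m₁ - m₂) * m₁ * (m₁ - 1) * (m₁ - G)) *
            h₁ ^ (1 + γ * (m₁ - 1))) * (h₁ ^ (-γ)) ^ (m₁ - 1)
        + m₂ * (m₂ - G) * C2 r δ κ γ m₁ m₂ α zα h₁ * (h₁ ^ (-γ)) ^ (m₂ - 1)
        = (m₁ * (m₁ - G) *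
            (2 * (1 - G) / (κ ^ 2 * (m₁ - m₂) * m₁ * (m₁ - 1) * (m₁ - G))) * 1
          + m₂ * (m₂ - G) *
            ((1 - G) / ((m₁ - m₂) * (m₂ - G)) *
              (m₁ * (α * δ - 1) / δ * ((zα ^ (m₂ - 1))⁻¹ * zα⁻¹)
                + (m₁ - 1) / r * (zα ^ (m₂ - 1))⁻¹)) * 1) * h₁ := by
      unfold C2
      rw [← hGdef, hz1, hz2]
      linear_combination (m₁ * (m₁ - G) *
          (2 * (1 - G) / (κ ^ 2 * (m₁ - m₂) * m₁ * (m₁ - 1) * (m₁ - G)))) * hE1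
        + (m₂ * (m₂ - G) *
            ((1 - G) / ((m₁ - m₂) * (m₂ - G)) *
              (m₁ * (α * δ - 1) / δ * ((zα ^ (m₂ - 1))⁻¹ * zα⁻¹)
                + (m₁ - 1) / r * (zα ^ (m₂ - 1))⁻¹))) * hE2
    rw [hval]
    calc _ ≤ 1 / (r * γ) * h₁ := mul_le_mul_of_nonneg_right hVcoef h10.le
      _ = h₁ / (r * γ) := by ring
  have hMa : m₁ * (m₁ - G) *
        (2 * (1 - G) / (κ ^ 2 * (m₁ - m₂) * m₁ * (m₁ - 1) * (m₁ - G)) *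
          h₁ ^ (1 + γ * (m₁ - 1))) * (zα * h₁ ^ (-γ)) ^ (m₁ - 1)
      + m₂ * (m₂ - G) * C2 r δ κ γ m₁ m₂ α zα h₁ * (zα * h₁ ^ (-γ)) ^ (m₂ - 1)
      ≤ h₁ / (r * γ) := by
    have hmr1 : (zα * h₁ ^ (-γ)) ^ (m₁ - 1) = zα ^ (m₁ - 1) * (h₁ ^ (-γ)) ^ (m₁ - 1) :=
      Real.mul_rpow hza0.le (Real.rpow_pos_of_pos h10 (-γ)).le
    have hmr2 : (zα * h₁ ^ (-γ)) ^ (m₂ - 1) = zα ^ (m₂ - 1) * (h₁ ^ (-γ)) ^ (m₂ - 1) :=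
      Real.mul_rpow hza0.le (Real.rpow_pos_of_pos h10 (-γ)).le
    rw [hmr1, hmr2]
    have hval : m₁ * (m₁ - G) *
          (2 * (1 - G) / (κ ^ 2 * (m₁ - m₂) * m₁ * (m₁ - 1) * (m₁ - G)) *
            h₁ ^ (1 + γ * (m₁ - 1))) * (zα ^ (m₁ - 1) * (h₁ ^ (-γ)) ^ (m₁ - 1))
        + m₂ * (m₂ - G) * C2 r δ κ γ m₁ m₂ α zα h₁ *
            (zα ^ (m₂ - 1) * (h₁ ^ (-γ)) ^ (m₂ - 1))
        = (m₁ * (m₁ - G) *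
            (2 * (1 - G) / (κ ^ 2 * (m₁ - m₂) * m₁ * (m₁ - 1) * (m₁ - G))) * zα ^ (m₁ - 1)
          + m₂ * (m₂ - G) *
            ((1 - G) / ((m₁ - m₂) * (m₂ - G)) *
              (m₁ * (α * δ - 1) / δ * ((zα ^ (m₂ - 1))⁻¹ * zα⁻¹)
                + (m₁ - 1) / r * (zα ^ (m₂ - 1))⁻¹)) * zα ^ (m₂ - 1)) * h₁ := by
      unfold C2
      rw [← hGdef, hz1, hz2]
      linear_combination (m₁ * (m₁ - G) *
          (2 * (1 - G) / (κ ^ 2 * (m₁ - m₂) * m₁ * (m₁ - 1) * (m₁ - G))) *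
          zα ^ (m₁ - 1)) * hE1
        + (m₂ * (m₂ - G) *
            ((1 - G) / ((m₁ - m₂) * (m₂ - G)) *
              (m₁ * (α * δ - 1) / δ * ((zα ^ (m₂ - 1))⁻¹ * zα⁻¹)
                + (m₁ - 1) / r * (zα ^ (m₂ - 1))⁻¹)) * zα ^ (m₂ - 1)) * hE2
    rw [hval]
    calc _ ≤ 1 / (r * γ) * h₁ := mul_le_mul_of_nonneg_right hIVcoef h10.le
      _ = h₁ / (r * γ) := by ring
  -- A coefficient nonneg
  have hAfull : 0 ≤ m₁ * (m₁ - G) *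
      (2 * (1 - G) / (κ ^ 2 * (m₁ - m₂) * m₁ * (m₁ - 1) * (m₁ - G)) *
        h₁ ^ (1 + γ * (m₁ - 1))) := by
    have h1 : 0 < m₁ - m₂ := by linarith
    have h2 : 0 < m₁ - G := by linarith
    have h3 : 0 < m₁ := by linarith
    have h4 : 0 < m₁ - 1 := by linarith
    have h5 : 0 < 2 * (1 - G) := by linarith
    positivity
  have hmain := interp_bound
    (m₁ * (m₁ - G) *
      (2 * (1 - G) / (κ ^ 2 * (m₁ - m₂) * m₁ * (m₁ - 1) * (m₁ - G)) *
        h₁ ^ (1 + γ * (m₁ - 1))))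
    (m₂ * (m₂ - G) * C2 r δ κ γ m₁ m₂ α zα h₁)
    (zα * h₁ ^ (-γ)) (h₁ ^ (-γ)) y (m₁ - 1) (m₂ - 1) (h₁ / (r * γ))
    hAfull hBfull hapos hy1 hy2 hMa hMb
  have hstep1 : m₁ * (m₁ - G) * C3 r δ κ γ m₁ m₂ β zβ h₂ * y ^ (m₁ - 1) ≤ 0 := by
    have he : m₁ * (m₁ - G) * C3 r δ κ γ m₁ m₂ β zβ h₂ * y ^ (m₁ - 1)
        = m₁ * (m₁ - G) * y ^ (m₁ - 1) * C3 r δ κ γ m₁ m₂ β zβ h₂ := by ring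
    rw [he]
    exact mul_nonpos_of_nonneg_of_nonpos
      (mul_nonneg (mul_nonneg (by linarith) (by linarith)) (Real.rpow_pos_of_pos hy0 _).le) hC3
  have hsplit : m₁ * (m₁ - G) * C1 r δ κ γ m₁ m₂ β zβ h₁ h₂ * y ^ (m₁ - 1)
      = m₁ * (m₁ - G) * C3 r δ κ γ m₁ m₂ β zβ h₂ * y ^ (m₁ - 1)
        + m₁ * (m₁ - G) *
          (2 * (1 - G) / (κ ^ 2 * (m₁ - m₂) * m₁ * (m₁ - 1) * (m₁ - G)) *
            h₁ ^ (1 + γ * (m₁ - 1))) * y ^ (m₁ - 1) := by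
    unfold C1
    rw [← hGdef]
    ring
  rw [hsplit]
  linarith only [hmain, hstep1]
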